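/- arXiv:1709.03773 — 2 statements merged into one kernel-verified Lean document; each statement's English description precedes it below -/
import Mathlib

section
/- Let α = cos z dx + sin z dy on ℝ³ and let X(x,y,z) = (Y₁(x,y), Y₂(x,y), m(x,y,z)) be a smooth contact vector field for α, i.e. there is a smooth μ : ℝ³ → ℝ with L_X α = μ·α pointwise. Set a(x,y,z) = cos(z)·Y₁(x,y) + sin(z)·Y₂(x,y) = α(X), let β = cos z dx + sin z dy − a dt on ℝ⁴ (coordinates (x,y,z,t)), and let W : ℝ⁴ → ℝ⁴ be the vector field W(x,y,z,t) = (Y₁(x,y), Y₂(x,y), m(x,y,z), 1), i.e. W = ∂_t + X. Then: (i) β(W) = 0 at every point; and (ii) for every smooth vector field Z : ℝ⁴ → ℝ⁴ satisfying β(Z) = 0 at every point, the Lie bracket [W,Z](p) = DZ_p(W(p)) − DW_p(Z(p)) also satisfies β([W,Z]) = 0 at every point. Hence the line field spanned by W = ∂_t + X is the kernel (characteristic foliation) of the even-contact structure ker β: it lies in ker β and satisfies [W, Γ(ker β)] ⊆ Γ(ker β). -/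
/-- The 1-form `α = cos z dx + sin z dy` on `ℝ³`. -/
noncomputable def alphaForm (p : Fin 3 → ℝ) : (Fin 3 → ℝ) →L[ℝ] ℝ :=
  Real.cos (p 2) • ContinuousLinearMap.proj 0 + Real.sin (p 2) • ContinuousLinearMap.proj 1

/-- The exterior derivative `dα_p(u, v) = (Dα_p u)(v) − (Dα_p v)(u)`. -/
noncomputable def dAlphaForm (p u v : Fin 3 → ℝ) : ℝ :=
  fderiv ℝ alphaForm p u v - fderiv ℝ alphaForm p v u

/-- The contact vector field `X(x,y,z) = (Y₁(x,y), Y₂(x,y), m(x,y,z))` on `ℝ³`. -/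
noncomputable def contactVF (Y₁ Y₂ : (Fin 2 → ℝ) → ℝ) (m : (Fin 3 → ℝ) → ℝ)
    (q : Fin 3 → ℝ) : Fin 3 → ℝ :=
  ![Y₁ ![q 0, q 1], Y₂ ![q 0, q 1], m q]

/-- The function `a(x,y,z) = cos(z)·Y₁(x,y) + sin(z)·Y₂(x,y) = α(X)`. -/
noncomputable def aFun (Y₁ Y₂ : (Fin 2 → ℝ) → ℝ) (q : Fin 3 → ℝ) : ℝ :=
  Real.cos (q 2) * Y₁ ![q 0, q 1] + Real.sin (q 2) * Y₂ ![q 0, q 1]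

/-- The 1-form `β = cos z dx + sin z dy − a dt` on `ℝ⁴`. -/
noncomputable def betaForm (Y₁ Y₂ : (Fin 2 → ℝ) → ℝ) (p : Fin 4 → ℝ) :
    (Fin 4 → ℝ) →L[ℝ] ℝ :=
  Real.cos (p 2) • ContinuousLinearMap.proj 0 + Real.sin (p 2) • ContinuousLinearMap.proj 1
    - aFun Y₁ Y₂ ![p 0, p 1, p 2] • ContinuousLinearMap.proj 3

/-- The vector field `W = ∂_t + X`, i.e. `W(x,y,z,t) = (Y₁(x,y), Y₂(x,y), m(x,y,z), 1)`. -/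
noncomputable def Wvf (Y₁ Y₂ : (Fin 2 → ℝ) → ℝ) (m : (Fin 3 → ℝ) → ℝ)
    (q : Fin 4 → ℝ) : Fin 4 → ℝ :=
  ![Y₁ ![q 0, q 1], Y₂ ![q 0, q 1], m ![q 0, q 1, q 2], 1]

/-- The Lie bracket `[V,Z](p) = DZ_p(V(p)) − DV_p(Z(p))` of vector fields on `ℝ⁴`. -/
noncomputable def lieBracket4 (V Z : (Fin 4 → ℝ) → (Fin 4 → ℝ)) (p : Fin 4 → ℝ) :
    Fin 4 → ℝ :=
  fderiv ℝ Z p (V p) - fderiv ℝ V p (Z p)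

/-!
With `π : ℝ⁴ → ℝ³` the projection and `a = α(X)`, the form is `β = π^*α − a dt` and
`W = ∂_t + X`, so `β(W) = α(X) − a = 0`. For a 1-form, `β([W,Z]) = W(β Z) − Z(β W) − dβ(W,Z)`,
which reduces to `−dβ(W,Z)` when `β(W) = β(Z) = 0`. The contact condition `d a + ι_X dα = μ α`
gives `ι_W dβ = μ β`: its `π^*`-part is the condition itself, and its `dt`-part asks for
`X a = μ a`, which is the condition evaluated on `X` (as `dα(X, X) = 0`). Hence
`β([W,Z]) = −μ β(Z) = 0`.
-/

open ContinuousLinearMap VectorField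

section ExteriorDerivative

variable {𝕜 E F : Type*} [NontriviallyNormedField 𝕜] [NormedAddCommGroup E] [NormedSpace 𝕜 E]
  [NormedAddCommGroup F] [NormedSpace 𝕜 F]

noncomputable def extDeriv₁ (β : E → E →L[𝕜] F) (p u v : E) : F :=
  fderiv 𝕜 β p u v - fderiv 𝕜 β p v u

theorem apply_lieBracket {β : E → E →L[𝕜] F} {V Z : E → E} {p : E}
    (hβ : DifferentiableAt 𝕜 β p) (hV : DifferentiableAt 𝕜 V p) (hZ : DifferentiableAt 𝕜 Z p) :
    β p (lieBracket 𝕜 V Z p) =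
      fderiv 𝕜 (fun q => β q (Z q)) p (V p) - fderiv 𝕜 (fun q => β q (V q)) p (Z p)
        - extDeriv₁ β p (V p) (Z p) := by
  rw [lieBracket, fderiv_clm_apply hβ hZ, fderiv_clm_apply hβ hV, extDeriv₁]
  simp only [add_apply, comp_apply, flip_apply, map_sub]
  abel

theorem apply_lieBracket_of_apply_eq_zero {β : E → E →L[𝕜] F} {V Z : E → E} {p : E}
    (hβ : DifferentiableAt 𝕜 β p) (hV : DifferentiableAt 𝕜 V p) (hZ : DifferentiableAt 𝕜 Z p)
    (hβV : ∀ q, β q (V q) = 0) (hβZ : ∀ q, β q (Z q) = 0) :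
    β p (lieBracket 𝕜 V Z p) = -extDeriv₁ β p (V p) (Z p) := by
  rw [apply_lieBracket hβ hV hZ, funext hβV, funext hβZ, fderiv_const_apply]
  simp

end ExteriorDerivative

section EvenContactForm

variable {𝕜 E G : Type*} [NontriviallyNormedField 𝕜] [NormedAddCommGroup E] [NormedSpace 𝕜 E]
  [NormedAddCommGroup G] [NormedSpace 𝕜 G]

/-- `L_X α = μ α`, with `L_X α` expanded by Cartan's formula `L_X α = d(α X) + ι_X dα`. -/
def IsContactVectorField (α : G → G →L[𝕜] 𝕜) (X : G → G) (μ : G → 𝕜) : Prop :=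
  ∀ x v, fderiv 𝕜 (fun y => α y (X y)) x v + extDeriv₁ α x (X x) v = μ x * α x v

noncomputable def evenContactForm (α : G → G →L[𝕜] 𝕜) (X : G → G) (π : E →L[𝕜] G)
    (τ : E →L[𝕜] 𝕜) (q : E) : E →L[𝕜] 𝕜 :=
  (α (π q)).comp π - α (π q) (X (π q)) • τ

variable {α : G → G →L[𝕜] 𝕜} {X : G → G} {π : E →L[𝕜] G} {τ : E →L[𝕜] 𝕜}

theorem evenContactForm_apply_eq_zero {q w : E} (hπ : π w = X (π q)) (hτ : τ w = 1) :
    evenContactForm α X π τ q w = 0 := by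
  simp [evenContactForm, hπ, hτ]

theorem hasFDerivAt_evenContactForm {q : E} (hα : DifferentiableAt 𝕜 α (π q))
    (ha : DifferentiableAt 𝕜 (fun y => α y (X y)) (π q)) :
    HasFDerivAt (evenContactForm α X π τ)
      (((compL 𝕜 E G 𝕜).flip π).comp ((fderiv 𝕜 α (π q)).comp π)
        - ((fderiv 𝕜 (fun y => α y (X y)) (π q)).comp π).smulRight τ) q := by
  have h := ((hα.hasFDerivAt.comp q π.hasFDerivAt).clm_comp (hasFDerivAt_const π q)).sub
    ((ha.hasFDerivAt.comp q π.hasFDerivAt).smul_const τ)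
  exact h.congr_fderiv (by simp)

theorem extDeriv₁_evenContactForm {q : E} (hα : DifferentiableAt 𝕜 α (π q))
    (ha : DifferentiableAt 𝕜 (fun y => α y (X y)) (π q)) (u v : E) :
    extDeriv₁ (evenContactForm α X π τ) q u v = extDeriv₁ α (π q) (π u) (π v)
      - fderiv 𝕜 (fun y => α y (X y)) (π q) (π u) * τ v
      + fderiv 𝕜 (fun y => α y (X y)) (π q) (π v) * τ u := by
  rw [extDeriv₁, extDeriv₁, (hasFDerivAt_evenContactForm hα ha).fderiv]
  simp only [sub_apply, comp_apply, flip_apply, compL_apply, smulRight_apply, smul_apply,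
    smul_eq_mul]
  ring

theorem IsContactVectorField.extDeriv₁_evenContactForm {μ : G → 𝕜}
    (hX : IsContactVectorField α X μ) {q w : E} (hπ : π w = X (π q)) (hτ : τ w = 1)
    (hα : DifferentiableAt 𝕜 α (π q)) (ha : DifferentiableAt 𝕜 (fun y => α y (X y)) (π q))
    (v : E) :
    extDeriv₁ (evenContactForm α X π τ) q w v = μ (π q) * evenContactForm α X π τ q v := by
  have hXv := hX (π q) (π v)
  have hXX := hX (π q) (X (π q))
  rw [extDeriv₁, sub_self, add_zero] at hXX
  rw [_root_.extDeriv₁_evenContactForm hα ha, hπ, hτ]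
  simp only [evenContactForm, sub_apply, comp_apply, smul_apply, smul_eq_mul]
  linear_combination hXv - τ v * hXX

end EvenContactForm

section Coordinates

variable {𝕜 E F : Type*} [NontriviallyNormedField 𝕜] [NormedAddCommGroup E] [NormedSpace 𝕜 E]
  [NormedAddCommGroup F] [NormedSpace 𝕜 F]

@[fun_prop]
theorem Differentiable.vecCons {n : ℕ} {f : E → F} {g : E → Fin n → F}
    (hf : Differentiable 𝕜 f) (hg : Differentiable 𝕜 g) :
    Differentiable 𝕜 fun x => Matrix.vecCons (f x) (g x) := by
  refine differentiable_pi.2 fun i => Fin.cases ?_ (fun j => ?_) i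
  · simpa using hf
  · simpa using differentiable_pi.1 hg j

end Coordinates

noncomputable def projXYZ : (Fin 4 → ℝ) →L[ℝ] (Fin 3 → ℝ) :=
  ContinuousLinearMap.pi fun i => ContinuousLinearMap.proj i.castSucc

@[simp]
theorem projXYZ_apply (q : Fin 4 → ℝ) : projXYZ q = ![q 0, q 1, q 2] := by
  ext i; fin_cases i <;> rfl

theorem betaForm_eq (Y₁ Y₂ : (Fin 2 → ℝ) → ℝ) (m : (Fin 3 → ℝ) → ℝ) :
    betaForm Y₁ Y₂ = evenContactForm alphaForm (contactVF Y₁ Y₂ m) projXYZ (proj 3) := by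
  ext q v
  simp [betaForm, evenContactForm, alphaForm, contactVF, aFun]

theorem projXYZ_Wvf (Y₁ Y₂ : (Fin 2 → ℝ) → ℝ) (m : (Fin 3 → ℝ) → ℝ) (q : Fin 4 → ℝ) :
    projXYZ (Wvf Y₁ Y₂ m q) = contactVF Y₁ Y₂ m (projXYZ q) := by
  simp [Wvf, contactVF]

theorem lieBracket4_eq_lieBracket : lieBracket4 = lieBracket ℝ := rfl

theorem differentiable_alphaForm : Differentiable ℝ alphaForm := by
  unfold alphaForm; fun_prop

theorem differentiable_alphaForm_contactVF {Y₁ Y₂ : (Fin 2 → ℝ) → ℝ} (m : (Fin 3 → ℝ) → ℝ)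
    (hY₁ : Differentiable ℝ Y₁) (hY₂ : Differentiable ℝ Y₂) :
    Differentiable ℝ fun q => alphaForm q (contactVF Y₁ Y₂ m q) := by
  simp only [alphaForm, contactVF, add_apply, smul_apply, proj_apply, Matrix.cons_val_zero,
    Matrix.cons_val_one]
  fun_prop

theorem differentiable_Wvf {Y₁ Y₂ : (Fin 2 → ℝ) → ℝ} {m : (Fin 3 → ℝ) → ℝ}
    (hY₁ : Differentiable ℝ Y₁) (hY₂ : Differentiable ℝ Y₂) (hm : Differentiable ℝ m) :
    Differentiable ℝ (Wvf Y₁ Y₂ m) := by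
  unfold Wvf; fun_prop

theorem kernel_of_even_contact_general
    (Y₁ Y₂ : (Fin 2 → ℝ) → ℝ) (m μ : (Fin 3 → ℝ) → ℝ)
    (hY₁ : ContDiff ℝ (⊤ : ℕ∞) Y₁) (hY₂ : ContDiff ℝ (⊤ : ℕ∞) Y₂)
    (hm : ContDiff ℝ (⊤ : ℕ∞) m)
    (hcontact : ∀ p v : Fin 3 → ℝ,
      fderiv ℝ (fun q => alphaForm q (contactVF Y₁ Y₂ m q)) p v
        + dAlphaForm p (contactVF Y₁ Y₂ m p) v = μ p * alphaForm p v) :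
    (∀ p : Fin 4 → ℝ, betaForm Y₁ Y₂ p (Wvf Y₁ Y₂ m p) = 0) ∧
    (∀ Z : (Fin 4 → ℝ) → (Fin 4 → ℝ), ContDiff ℝ (⊤ : ℕ∞) Z →
      (∀ p : Fin 4 → ℝ, betaForm Y₁ Y₂ p (Z p) = 0) →
      ∀ p : Fin 4 → ℝ, betaForm Y₁ Y₂ p (lieBracket4 (Wvf Y₁ Y₂ m) Z p) = 0) := by
  have hX : IsContactVectorField alphaForm (contactVF Y₁ Y₂ m) μ := hcontact
  have hWX : ∀ q, projXYZ (Wvf Y₁ Y₂ m q) = contactVF Y₁ Y₂ m (projXYZ q) := projXYZ_Wvf Y₁ Y₂ m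
  have hWt : ∀ q, (proj 3 : (Fin 4 → ℝ) →L[ℝ] ℝ) (Wvf Y₁ Y₂ m q) = 1 := fun _ => rfl
  have hβW : ∀ q, evenContactForm alphaForm (contactVF Y₁ Y₂ m) projXYZ (proj 3) q
      (Wvf Y₁ Y₂ m q) = 0 := fun q => evenContactForm_apply_eq_zero (hWX q) (hWt q)
  rw [betaForm_eq Y₁ Y₂ m]
  refine ⟨hβW, fun Z hZ hβZ p => ?_⟩
  have hα := differentiable_alphaForm (projXYZ p)
  have ha := differentiable_alphaForm_contactVF m (hY₁.differentiable (by simp))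
    (hY₂.differentiable (by simp)) (projXYZ p)
  have hW := differentiable_Wvf (hY₁.differentiable (by simp)) (hY₂.differentiable (by simp))
    (hm.differentiable (by simp)) p
  rw [lieBracket4_eq_lieBracket,
    apply_lieBracket_of_apply_eq_zero (hasFDerivAt_evenContactForm hα ha).differentiableAt hW
      (hZ.differentiable (by simp) p) hβW hβZ,
    hX.extDeriv₁_evenContactForm (hWX p) (hWt p) hα ha, hβZ p, mul_zero, neg_zero]

/-- If `X = (Y₁, Y₂, m)` is a smooth contact vector field for `α = cos z dx + sin z dy`
(`L_X α = μ·α`), `a = α(X)` and `β = cos z dx + sin z dy − a dt` on `ℝ⁴`, then the vector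
field `W = ∂_t + X` satisfies `β(W) = 0` and, for every smooth vector field `Z` with
`β(Z) = 0` everywhere, also `β([W,Z]) = 0` everywhere: the line field spanned by `W` is the
kernel (characteristic foliation) of the even-contact structure `ker β`. -/
theorem kernel_of_even_contact
    (Y₁ Y₂ : (Fin 2 → ℝ) → ℝ) (m μ : (Fin 3 → ℝ) → ℝ)
    (hY₁ : ContDiff ℝ (⊤ : ℕ∞) Y₁) (hY₂ : ContDiff ℝ (⊤ : ℕ∞) Y₂)
    (hm : ContDiff ℝ (⊤ : ℕ∞) m) (hμ : ContDiff ℝ (⊤ : ℕ∞) μ)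
    (hcontact : ∀ p v : Fin 3 → ℝ,
      fderiv ℝ (fun q => alphaForm q (contactVF Y₁ Y₂ m q)) p v
        + dAlphaForm p (contactVF Y₁ Y₂ m p) v = μ p * alphaForm p v) :
    (∀ p : Fin 4 → ℝ, betaForm Y₁ Y₂ p (Wvf Y₁ Y₂ m p) = 0) ∧
    (∀ Z : (Fin 4 → ℝ) → (Fin 4 → ℝ), ContDiff ℝ (⊤ : ℕ∞) Z →
      (∀ p : Fin 4 → ℝ, betaForm Y₁ Y₂ p (Z p) = 0) →
      ∀ p : Fin 4 → ℝ, betaForm Y₁ Y₂ p (lieBracket4 (Wvf Y₁ Y₂ m) Z p) = 0) :=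
  kernel_of_even_contact_general Y₁ Y₂ m μ hY₁ hY₂ hm hcontact
end

section
/- Let h : ℝ → ℝ be a smooth function with h(r) < 0 for r ∈ (1/2, 2/3) and h(r) = 0 for r ∉ (1/2, 2/3). Then there exists a smooth map V : [0,1] × ℝ × ℝ → ℝ², V = V(s,r,t) = (V₁, V₂), satisfying: (i) V(s,r,t+1) = V(s,r,t) for all (s,r,t) (periodicity in t); (ii) V(s,r,t) ≠ (0,0) for all (s,r,t); (iii) V(1,r,t) = (1,0) for all (r,t); (iv) V(s,r,t) = (1,0) whenever r ∉ (1/2, 2/3); (v) for all (s,r,t), V₁(s,r,t) − h(r)·V₂(s,r,t) ≠ 0 (transversality of the line field spanned by V to the line field spanned by (h(r),1)); (vi) for every s > 0 and all (r,t), V₁(s,r,t) > 0 (so the line field at time s is isotopic to the horizontal one); and (vii) V(0, 7/12, t) = (0,1) for all t, while V₁(0,r,t) > 0 for every r ≠ 7/12 (so at time 0 the line field has a closed orbit at r = 7/12 bounding a Reeb component). -/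
/-!
Rotate the horizontal field `(1, 0)` towards the vertical one along the segment `(1 - a, a)`,
where the tilt is `a(s, r) = (1 - smoothTransition s) · β(r)` and `β` is a smooth bump on
`(1/2, 2/3)` with `β = 1` only at `7/12`. The tilt stays in `[0, 1]` and reaches `1` only at
`(s, r) = (0, 7/12)`, which gives the vertical closed orbit there and a positive first
component everywhere else. Transversality to `(h(r), 1)` amounts to `(1 - a) - h(r) a ≠ 0`:
outside `(1/2, 2/3)` we have `a = 0`, and inside `h < 0`.
-/

open Set Real

namespace Turbulisation

noncomputable def bump (c δ r : ℝ) : ℝ := smoothTransition (1 - ((r - c) / δ) ^ 2)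

variable {c δ r s : ℝ}

theorem contDiff_bump {n : ℕ∞} : ContDiff ℝ n (bump c δ) :=
  smoothTransition.contDiff.comp (by fun_prop)

theorem bump_nonneg : 0 ≤ bump c δ r := smoothTransition.nonneg _

theorem bump_le_one : bump c δ r ≤ 1 := smoothTransition.le_one _

@[simp] theorem bump_self : bump c δ c = 1 := by
  simp [bump, smoothTransition.one]

theorem bump_lt_one (hδ : δ ≠ 0) (hr : r ≠ c) : bump c δ r < 1 := by
  refine smoothTransition.lt_one_of_lt_one ?_
  have : 0 < ((r - c) / δ) ^ 2 := by positivity [sub_ne_zero.2 hr]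
  linarith

theorem bump_eq_zero (hδ : 0 < δ) (hr : r ∉ Ioo (c - δ) (c + δ)) : bump c δ r = 0 := by
  refine smoothTransition.zero_of_nonpos ?_
  have hsq : 1 ≤ |(r - c) / δ| := by
    rw [abs_div, abs_of_pos hδ, one_le_div hδ, le_abs]
    rw [mem_Ioo, not_and_or, not_lt, not_lt] at hr
    rcases hr with hr | hr
    · right; linarith
    · left; linarith
  nlinarith [one_le_sq_iff_one_le_abs _ |>.2 hsq]

noncomputable def tilt (c δ s r : ℝ) : ℝ := (1 - smoothTransition s) * bump c δ r

theorem contDiff_tilt {n : ℕ∞} : ContDiff ℝ n fun p : ℝ × ℝ => tilt c δ p.1 p.2 :=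
  (contDiff_const.sub (smoothTransition.contDiff.comp contDiff_fst)).mul
    (contDiff_bump.comp contDiff_snd)

theorem tilt_nonneg : 0 ≤ tilt c δ s r :=
  mul_nonneg (sub_nonneg.2 (smoothTransition.le_one s)) bump_nonneg

theorem tilt_le_one : tilt c δ s r ≤ 1 :=
  mul_le_one₀ (by linarith [smoothTransition.nonneg s]) bump_nonneg bump_le_one

theorem tilt_lt_one_of_pos (hs : 0 < s) : tilt c δ s r < 1 := by
  have := smoothTransition.pos_of_pos hs
  calc tilt c δ s r ≤ 1 - smoothTransition s :=
        mul_le_of_le_one_right (by linarith [smoothTransition.le_one s]) bump_le_one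
    _ < 1 := by linarith

theorem tilt_zero_lt_one (hδ : δ ≠ 0) (hr : r ≠ c) : tilt c δ 0 r < 1 := by
  simpa [tilt] using bump_lt_one hδ hr

@[simp] theorem tilt_zero_self : tilt c δ 0 c = 1 := by simp [tilt]

@[simp] theorem tilt_one : tilt c δ 1 r = 0 := by simp [tilt]

theorem tilt_eq_zero (hδ : 0 < δ) (hr : r ∉ Ioo (c - δ) (c + δ)) :
    tilt c δ s r = 0 := by
  simp [tilt, bump_eq_zero hδ hr]

end Turbulisation

theorem one_sub_sub_mul_pos {a k : ℝ} (ha₀ : 0 ≤ a) (ha₁ : a ≤ 1) (hk : k < 0) :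
    0 < 1 - a - k * a := by
  rcases ha₁.lt_or_eq with ha | rfl
  · nlinarith
  · linarith

open Turbulisation in
theorem turbulisation_line_field_homotopy_general
    (h : ℝ → ℝ)
    (hneg : ∀ r ∈ Set.Ioo (1/2 : ℝ) (2/3), h r < 0) :
    ∃ V : ℝ → ℝ → ℝ → ℝ × ℝ,
      ContDiff ℝ (⊤ : ℕ∞) (fun p : ℝ × ℝ × ℝ => V p.1 p.2.1 p.2.2) ∧
      -- (i) periodicity in t
      (∀ s ∈ Set.Icc (0:ℝ) 1, ∀ r t : ℝ, V s r (t + 1) = V s r t) ∧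
      -- (ii) nowhere vanishing
      (∀ s ∈ Set.Icc (0:ℝ) 1, ∀ r t : ℝ, V s r t ≠ (0, 0)) ∧
      -- (iii) at s = 1 the field is horizontal
      (∀ r t : ℝ, V 1 r t = (1, 0)) ∧
      -- (iv) horizontal outside the turbulisation region
      (∀ s ∈ Set.Icc (0:ℝ) 1, ∀ r ∉ Set.Ioo (1/2 : ℝ) (2/3), ∀ t : ℝ, V s r t = (1, 0)) ∧
      -- (v) transversality to the line field spanned by (h(r), 1)
      (∀ s ∈ Set.Icc (0:ℝ) 1, ∀ r t : ℝ, (V s r t).1 - h r * (V s r t).2 ≠ 0) ∧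
      -- (vi) for s > 0 the line field is isotopic to the horizontal one
      (∀ s ∈ Set.Ioc (0:ℝ) 1, ∀ r t : ℝ, 0 < (V s r t).1) ∧
      -- (vii) at s = 0: closed orbit at r = 7/12 bounding a Reeb component
      (∀ t : ℝ, V 0 (7/12) t = (0, 1)) ∧
      (∀ r : ℝ, r ≠ 7/12 → ∀ t : ℝ, 0 < (V 0 r t).1) := by
  set a := tilt (7/12) (1/12)
  have hregion : Ioo (7/12 - 1/12 : ℝ) (7/12 + 1/12) = Ioo (1/2) (2/3) := by norm_num
  have outside : ∀ s, ∀ r ∉ Ioo (1/2 : ℝ) (2/3), a s r = 0 := fun s r hr =>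
    tilt_eq_zero (by norm_num) (hregion ▸ hr)
  refine ⟨fun s r _ => (1 - a s r, a s r), ?_, fun _ _ _ _ => rfl, ?_, fun r _ => ?_,
    fun s _ r hr _ => ?_, fun s _ r _ => ?_, fun s hs r _ => ?_, fun _ => ?_,
    fun r hr _ => ?_⟩
  · have ha : ContDiff ℝ (⊤ : ℕ∞) fun p : ℝ × ℝ × ℝ => a p.1 p.2.1 :=
      contDiff_tilt.comp (contDiff_fst.prodMk (contDiff_fst.comp contDiff_snd))
    exact (contDiff_const.sub ha).prodMk ha
  · intro s _ r _ hV
    simp only [Prod.mk.injEq] at hV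
    linarith [hV.1, hV.2]
  · simp [a]
  · simp [outside s r hr]
  · by_cases hr : r ∈ Ioo (1/2 : ℝ) (2/3)
    · exact (one_sub_sub_mul_pos tilt_nonneg tilt_le_one (hneg r hr)).ne'
    · simp [outside s r hr]
  · exact sub_pos.2 (tilt_lt_one_of_pos hs.1)
  · simp [a]
  · exact sub_pos.2 (tilt_zero_lt_one (by norm_num) hr)

/-- Let `h : ℝ → ℝ` be smooth, negative exactly on `(1/2, 2/3)` and zero elsewhere. Then
there is a smooth family `V(s,r,t)` of vector fields on the annulus `S = [0,1] × S¹`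
(1-periodic in `t`, parametrised by `s ∈ [0,1]`) realising the turbulisation homotopy of
line fields: nowhere vanishing, equal to the horizontal field `(1,0)` at `s = 1` and
outside `r ∈ (1/2, 2/3)`, everywhere transverse to the line field `L` spanned by
`(h(r), 1)`, isotopic to the horizontal field for `s > 0` (positive first component), and
at `s = 0` possessing a closed orbit at `r = 7/12` bounding a Reeb component. -/
theorem turbulisation_line_field_homotopy
    (h : ℝ → ℝ) (hsm : ContDiff ℝ (⊤ : ℕ∞) h)
    (hneg : ∀ r ∈ Set.Ioo (1/2 : ℝ) (2/3), h r < 0)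
    (hzero : ∀ r ∉ Set.Ioo (1/2 : ℝ) (2/3), h r = 0) :
    ∃ V : ℝ → ℝ → ℝ → ℝ × ℝ,
      ContDiff ℝ (⊤ : ℕ∞) (fun p : ℝ × ℝ × ℝ => V p.1 p.2.1 p.2.2) ∧
      -- (i) periodicity in t
      (∀ s ∈ Set.Icc (0:ℝ) 1, ∀ r t : ℝ, V s r (t + 1) = V s r t) ∧
      -- (ii) nowhere vanishing
      (∀ s ∈ Set.Icc (0:ℝ) 1, ∀ r t : ℝ, V s r t ≠ (0, 0)) ∧
      -- (iii) at s = 1 the field is horizontal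
      (∀ r t : ℝ, V 1 r t = (1, 0)) ∧
      -- (iv) horizontal outside the turbulisation region
      (∀ s ∈ Set.Icc (0:ℝ) 1, ∀ r ∉ Set.Ioo (1/2 : ℝ) (2/3), ∀ t : ℝ, V s r t = (1, 0)) ∧
      -- (v) transversality to the line field spanned by (h(r), 1)
      (∀ s ∈ Set.Icc (0:ℝ) 1, ∀ r t : ℝ, (V s r t).1 - h r * (V s r t).2 ≠ 0) ∧
      -- (vi) for s > 0 the line field is isotopic to the horizontal one
      (∀ s ∈ Set.Ioc (0:ℝ) 1, ∀ r t : ℝ, 0 < (V s r t).1) ∧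
      -- (vii) at s = 0: closed orbit at r = 7/12 bounding a Reeb component
      (∀ t : ℝ, V 0 (7/12) t = (0, 1)) ∧
      (∀ r : ℝ, r ≠ 7/12 → ∀ t : ℝ, 0 < (V 0 r t).1) :=
  turbulisation_line_field_homotopy_general h hneg
end
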